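/- The two zero-one vectors z₁ = (1,1,0,1,0,1) and z₂ = (1,0,1,0,1,1) are invariant for the set S = {(a,b,c,d,e,f) ∈ ℕ⁶ : a ≤ f, a+b+c = d+e+f, a = d + min(c,e)}; that is, for any p ∈ ℕ⁶ and integer c with p + c·zᵢ having non-negative entries, p ∈ S if and only if p + c·zᵢ ∈ S. -/

import Mathlib

/-! Both sets of conditions defining `S` make sense on `ℤ⁶`, and there they are unchanged by
translation by any `v` with `v₀ = v₁ + v₂ = v₃ + v₂ = v₅` and `v₂ = v₄`: the inequality
`a ≤ f` and the equation `a = d + min(c,e)` move both sides by the same amount (using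
`min (c + t) (e + t) = min c e + t`), and the sum equation gains `2v₀` on each side.
Every integer multiple of `z₁` or `z₂` is such a `v`. -/

/-- A zero-one vector z is invariant for a set S of positions if adding any
integer multiple of z that keeps all entries non-negative preserves
membership in S. -/
def InvariantVec {n : ℕ} (S : Set (Fin n → ℕ)) (z : Fin n → ℕ) : Prop :=
  ∀ p : Fin n → ℕ, ∀ c : ℤ, (∀ i, 0 ≤ (p i : ℤ) + c * (z i : ℤ)) →
    (p ∈ S ↔ (fun i => ((p i : ℤ) + c * (z i : ℤ)).toNat) ∈ S)

/-- The set S of P-positions of the game H: a ≤ f, a+b+c = d+e+f,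
a = d + min(c,e). -/
def SetH : Set (Fin 6 → ℕ) :=
  {p | p 0 ≤ p 5 ∧ p 0 + p 1 + p 2 = p 3 + p 4 + p 5 ∧
    p 0 = p 3 + min (p 2) (p 4)}

abbrev natCastVec {n : ℕ} (p : Fin n → ℕ) : Fin n → ℤ := fun i => (p i : ℤ)

theorem invariantVec_of_eq_preimage {n : ℕ} {S : Set (Fin n → ℕ)} {T : Set (Fin n → ℤ)}
    {z : Fin n → ℕ} (hS : S = natCastVec ⁻¹' T)
    (hT : ∀ q : Fin n → ℤ, ∀ c : ℤ, q + c • natCastVec z ∈ T ↔ q ∈ T) :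
    InvariantVec S z := by
  intro p c hnonneg
  have hcast : natCastVec (fun i => ((p i : ℤ) + c * (z i : ℤ)).toNat) =
      natCastVec p + c • natCastVec z := by
    funext i
    simp [Int.toNat_of_nonneg (hnonneg i)]
  simp only [hS, Set.mem_preimage, hcast, hT]

def SetHInt : Set (Fin 6 → ℤ) :=
  {q | q 0 ≤ q 5 ∧ q 0 + q 1 + q 2 = q 3 + q 4 + q 5 ∧ q 0 = q 3 + min (q 2) (q 4)}

theorem setH_eq_preimage_setHInt : SetH = natCastVec ⁻¹' SetHInt := by
  ext p
  simp only [SetH, SetHInt, Set.mem_ofPred_eq, Set.mem_preimage]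
  norm_cast

theorem add_mem_setHInt_iff (q v : Fin 6 → ℤ) (h1 : v 0 = v 1 + v 2) (h3 : v 0 = v 3 + v 2)
    (h4 : v 4 = v 2) (h5 : v 5 = v 0) : q + v ∈ SetHInt ↔ q ∈ SetHInt := by
  simp only [SetHInt, Set.mem_ofPred_eq, Pi.add_apply]
  omega

/-- the zero-one vectors z₁ = (1,1,0,1,0,1) and
z₂ = (1,0,1,0,1,1) are invariant for S. -/
theorem gameH_invariants :
    InvariantVec SetH ![1, 1, 0, 1, 0, 1] ∧ InvariantVec SetH ![1, 0, 1, 0, 1, 1] := by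
  constructor <;>
  · refine invariantVec_of_eq_preimage setH_eq_preimage_setHInt
      fun q c => add_mem_setHInt_iff q _ ?_ ?_ ?_ ?_ <;>
    simp [natCastVec]
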